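/- The stabilizer Rényi entropy is additive under tensor products: M̃_α(ρ ⊗ σ) = M̃_α(ρ) + M̃_α(σ), where ρ is an N-qubit and σ an M-qubit density matrix. -/

import Mathlib

open Matrix BigOperators
open scoped ComplexOrder

/-- The four single-qubit Pauli matrices `I, σx, σy, σz`. -/
noncomputable def pauli : Fin 4 → Matrix (Fin 2) (Fin 2) ℂ :=
  ![1, !![0, 1; 1, 0], !![0, -Complex.I; Complex.I, 0], !![1, 0; 0, -1]]

/-- The `N`-qubit Pauli string `⊗_k σ_{s k}` as a matrix on `(ℂ²)^⊗N`. -/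
noncomputable def PauliString {N : ℕ} (s : Fin N → Fin 4) :
    Matrix (Fin N → Fin 2) (Fin N → Fin 2) ℂ :=
  Matrix.of fun i j => ∏ k, pauli (s k) (i k) (j k)

/-- The Pauli distribution `p_ρ(P) = 2^{-N} tr(ρP)² / tr(ρ²)`. -/
noncomputable def pDist {N : ℕ} (ρ : Matrix (Fin N → Fin 2) (Fin N → Fin 2) ℂ)
    (s : Fin N → Fin 4) : ℝ :=
  ((ρ * PauliString s).trace.re) ^ 2 / ((2 : ℝ) ^ N * ((ρ * ρ).trace.re))

/-- The `α`-Rényi entropy `H_α[p] = (1/(1-α)) ln Σ_i p(i)^α` of a distribution,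
with the Shannon entropy at `α = 1` (its limiting value). -/
noncomputable def renyiH {ι : Type*} [Fintype ι] (α : ℝ) (p : ι → ℝ) : ℝ :=
  if α = 1 then -∑ i, p i * Real.log (p i)
  else (1 - α)⁻¹ * Real.log (∑ i, p i ^ α)

/-- The 2-Rényi entropy `S_2(ρ) = -ln tr(ρ²)`. -/
noncomputable def S2 {N : ℕ} (ρ : Matrix (Fin N → Fin 2) (Fin N → Fin 2) ℂ) : ℝ :=
  -Real.log ((ρ * ρ).trace.re)

/-- The mixed-state stabilizer Rényi entropy `M̃_α(ρ) = H_α[p_ρ] + S_2(ρ) - N ln 2`. -/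
noncomputable def Msre {N : ℕ} (α : ℝ)
    (ρ : Matrix (Fin N → Fin 2) (Fin N → Fin 2) ℂ) : ℝ :=
  renyiH α (pDist ρ) + S2 ρ - N * Real.log 2

/-- The tensor product `ρ ⊗ σ` of an `N`-qubit and an `M`-qubit operator. -/
noncomputable def tensorDM {N M : ℕ}
    (ρ : Matrix (Fin N → Fin 2) (Fin N → Fin 2) ℂ)
    (σ : Matrix (Fin M → Fin 2) (Fin M → Fin 2) ℂ) :
    Matrix (Fin (N + M) → Fin 2) (Fin (N + M) → Fin 2) ℂ :=
  Matrix.of fun i j =>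
    ρ (fun k => i (Fin.castAdd M k)) (fun k => j (Fin.castAdd M k)) *
      σ (fun k => i (Fin.natAdd N k)) (fun k => j (Fin.natAdd N k))

/-! ### Auxiliary lemmas -/

lemma pauli_conj (t : Fin 4) (a b : Fin 2) :
    (starRingEnd ℂ) (pauli t a b) = pauli t b a := by
  fin_cases t <;> fin_cases a <;> fin_cases b <;> simp [pauli, Matrix.one_apply]

lemma pauli_orth (a b c d : Fin 2) :
    ∑ t : Fin 4, pauli t a b * pauli t c d =
      (if a = d then 1 else 0) * (if b = c then 1 else 0) * 2 := by
  fin_cases a <;> fin_cases b <;> fin_cases c <;> fin_cases d <;>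
    simp [pauli, Fin.sum_univ_four, Matrix.one_apply] <;> ring_nf <;>
    simp [Complex.I_sq]

lemma pauliString_herm {N : ℕ} (s : Fin N → Fin 4) :
    (PauliString s)ᴴ = PauliString s := by
  ext i j
  simp only [Matrix.conjTranspose_apply, PauliString, Matrix.of_apply]
  rw [show (star : ℂ → ℂ) = (starRingEnd ℂ) from rfl, map_prod]
  simp [pauli_conj]

lemma pauli_orth_string {N : ℕ} (i j k l : Fin N → Fin 2) :
    ∑ s : Fin N → Fin 4,
      (∏ m, pauli (s m) (j m) (i m)) * ∏ m, pauli (s m) (l m) (k m)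
      = (if j = k then 1 else 0) * (if i = l then 1 else 0) * 2 ^ N := by
  simp_rw [← Finset.prod_mul_distrib]
  rw [← Fintype.prod_sum (fun m t => pauli t (j m) (i m) * pauli t (l m) (k m))]
  simp_rw [pauli_orth]
  rw [Finset.prod_mul_distrib, Finset.prod_mul_distrib, Finset.prod_const,
    Finset.prod_boole, Finset.prod_boole]
  simp [funext_iff, Finset.card_univ]

lemma sum_trace_sq {N : ℕ} (ρ : Matrix (Fin N → Fin 2) (Fin N → Fin 2) ℂ) :
    ∑ s : Fin N → Fin 4, ((ρ * PauliString s).trace) ^ 2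
      = 2 ^ N * (ρ * ρ).trace := by
  have htr : ∀ s : Fin N → Fin 4, (ρ * PauliString s).trace
      = ∑ p : (Fin N → Fin 2) × (Fin N → Fin 2),
          ρ p.1 p.2 * ∏ m, pauli (s m) (p.2 m) (p.1 m) := by
    intro s
    rw [Fintype.sum_prod_type]
    simp [Matrix.trace, Matrix.diag, Matrix.mul_apply, PauliString]
  calc ∑ s : Fin N → Fin 4, ((ρ * PauliString s).trace) ^ 2
      = ∑ s : Fin N → Fin 4,
          ∑ p : (Fin N → Fin 2) × (Fin N → Fin 2),
          ∑ q : (Fin N → Fin 2) × (Fin N → Fin 2),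
          (ρ p.1 p.2 * ρ q.1 q.2) *
            ((∏ m, pauli (s m) (p.2 m) (p.1 m)) *
              ∏ m, pauli (s m) (q.2 m) (q.1 m)) := by
        refine Finset.sum_congr rfl fun s _ => ?_
        rw [htr, sq, Finset.sum_mul_sum]
        exact Finset.sum_congr rfl fun p _ => Finset.sum_congr rfl fun q _ => by ring
    _ = ∑ p : (Fin N → Fin 2) × (Fin N → Fin 2),
          ∑ q : (Fin N → Fin 2) × (Fin N → Fin 2),
          (ρ p.1 p.2 * ρ q.1 q.2) *
            ((if p.2 = q.1 then 1 else 0) * (if p.1 = q.2 then 1 else 0) * 2 ^ N) := by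
        rw [Finset.sum_comm]
        refine Finset.sum_congr rfl fun p _ => ?_
        rw [Finset.sum_comm]
        refine Finset.sum_congr rfl fun q _ => ?_
        rw [← Finset.mul_sum, pauli_orth_string]
    _ = 2 ^ N * (ρ * ρ).trace := by
        simp only [Fintype.sum_prod_type, mul_ite, mul_one, mul_zero, ite_mul, zero_mul,
          Finset.sum_ite_eq, Finset.sum_ite_eq', Finset.mem_univ, if_true]
        simp [Matrix.trace, Matrix.diag, Matrix.mul_apply, Finset.mul_sum]
        ring_nf

lemma trace_pauli_real {N : ℕ} {ρ : Matrix (Fin N → Fin 2) (Fin N → Fin 2) ℂ}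
    (hρ : ρ.IsHermitian) (s : Fin N → Fin 4) :
    (((ρ * PauliString s).trace.re : ℝ) : ℂ) = (ρ * PauliString s).trace := by
  rw [← Complex.conj_eq_iff_re]
  calc (starRingEnd ℂ) (ρ * PauliString s).trace
      = ((ρ * PauliString s)ᴴ).trace := (Matrix.trace_conjTranspose _).symm
    _ = (PauliString s * ρ).trace := by
        rw [Matrix.conjTranspose_mul, pauliString_herm, hρ.eq]
    _ = (ρ * PauliString s).trace := Matrix.trace_mul_comm _ _

lemma trace_sq_real {N : ℕ} {ρ : Matrix (Fin N → Fin 2) (Fin N → Fin 2) ℂ}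
    (hρ : ρ.IsHermitian) :
    (((ρ * ρ).trace.re : ℝ) : ℂ) = (ρ * ρ).trace := by
  rw [← Complex.conj_eq_iff_re]
  calc (starRingEnd ℂ) (ρ * ρ).trace
      = ((ρ * ρ)ᴴ).trace := (Matrix.trace_conjTranspose _).symm
    _ = (ρ * ρ).trace := by rw [Matrix.conjTranspose_mul, hρ.eq]

lemma trace_sq_pos {N : ℕ} {ρ : Matrix (Fin N → Fin 2) (Fin N → Fin 2) ℂ}
    (hρ : ρ.IsHermitian) (hρtr : ρ.trace = 1) :
    0 < (ρ * ρ).trace.re := by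
  have hform : (ρ * ρ).trace = ((∑ i, ∑ j, Complex.normSq (ρ i j) : ℝ) : ℂ) := by
    have h2 : ρ * ρ = ρ * ρᴴ := by rw [hρ.eq]
    rw [h2]
    simp only [Matrix.trace, Matrix.diag, Matrix.mul_apply, Matrix.conjTranspose_apply]
    push_cast
    refine Finset.sum_congr rfl fun i _ => Finset.sum_congr rfl fun j _ => ?_
    rw [show (star (ρ i j) : ℂ) = (starRingEnd ℂ) (ρ i j) from rfl, Complex.mul_conj]
  have hne : ρ ≠ 0 := by
    intro h; rw [h] at hρtr; simp at hρtr
  obtain ⟨i, j, hij⟩ : ∃ i j, ρ i j ≠ 0 := by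
    by_contra hc; push_neg at hc
    exact hne (by ext i j; simpa using hc i j)
  rw [hform, Complex.ofReal_re]
  refine Finset.sum_pos' (fun a _ => Finset.sum_nonneg fun b _ => Complex.normSq_nonneg _)
    ⟨i, Finset.mem_univ i, Finset.sum_pos' (fun b _ => Complex.normSq_nonneg _)
      ⟨j, Finset.mem_univ j, Complex.normSq_pos.mpr hij⟩⟩

lemma pDist_nonneg {N : ℕ} {ρ : Matrix (Fin N → Fin 2) (Fin N → Fin 2) ℂ}
    (hρ : ρ.IsHermitian) (hρtr : ρ.trace = 1) (s : Fin N → Fin 4) :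
    0 ≤ pDist ρ s := by
  have := trace_sq_pos hρ hρtr
  exact div_nonneg (sq_nonneg _) (by positivity)

lemma sum_pDist {N : ℕ} {ρ : Matrix (Fin N → Fin 2) (Fin N → Fin 2) ℂ}
    (hρ : ρ.IsHermitian) (hρtr : ρ.trace = 1) :
    ∑ s : Fin N → Fin 4, pDist ρ s = 1 := by
  have hD : (0 : ℝ) < (2 : ℝ) ^ N * (ρ * ρ).trace.re := by
    have := trace_sq_pos hρ hρtr
    positivity
  have key : ∑ s : Fin N → Fin 4, ((ρ * PauliString s).trace.re) ^ 2
      = (2 : ℝ) ^ N * (ρ * ρ).trace.re := by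
    have hcast : ((∑ s : Fin N → Fin 4, ((ρ * PauliString s).trace.re) ^ 2 : ℝ) : ℂ)
        = (((2 : ℝ) ^ N * (ρ * ρ).trace.re : ℝ) : ℂ) := by
      push_cast
      calc ∑ s : Fin N → Fin 4, (((ρ * PauliString s).trace.re : ℝ) : ℂ) ^ 2
          = ∑ s : Fin N → Fin 4, ((ρ * PauliString s).trace) ^ 2 := by
            exact Finset.sum_congr rfl fun s _ => by rw [trace_pauli_real hρ]
        _ = 2 ^ N * (ρ * ρ).trace := sum_trace_sq ρ
        _ = 2 ^ N * (((ρ * ρ).trace.re : ℝ) : ℂ) := by rw [trace_sq_real hρ]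
    exact_mod_cast hcast
  unfold pDist
  rw [← Finset.sum_div, key, div_self hD.ne']

lemma sum_append {N M : ℕ} (f : (Fin (N + M) → Fin 2) → ℂ) :
    ∑ x : Fin (N + M) → Fin 2, f x =
      ∑ a : Fin N → Fin 2, ∑ b : Fin M → Fin 2, f (Fin.append a b) := by
  rw [← (Fin.appendEquiv N M).sum_comp f, Fintype.sum_prod_type]
  rfl

lemma tensor_mul {N M : ℕ}
    (A C : Matrix (Fin N → Fin 2) (Fin N → Fin 2) ℂ)
    (B D : Matrix (Fin M → Fin 2) (Fin M → Fin 2) ℂ) :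
    tensorDM A B * tensorDM C D = tensorDM (A * C) (B * D) := by
  ext i j
  simp only [Matrix.mul_apply, tensorDM, Matrix.of_apply]
  rw [sum_append]
  simp only [Fin.append_left, Fin.append_right]
  rw [Finset.sum_mul_sum]
  congr 1; ext a; congr 1; ext b; ring

lemma tensor_trace {N M : ℕ}
    (A : Matrix (Fin N → Fin 2) (Fin N → Fin 2) ℂ)
    (B : Matrix (Fin M → Fin 2) (Fin M → Fin 2) ℂ) :
    (tensorDM A B).trace = A.trace * B.trace := by
  simp only [Matrix.trace, Matrix.diag, tensorDM, Matrix.of_apply]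
  rw [sum_append]
  simp only [Fin.append_left, Fin.append_right]
  rw [Finset.sum_mul_sum]

lemma pauli_split {N M : ℕ} (s : Fin (N + M) → Fin 4) :
    PauliString s = tensorDM (PauliString fun k => s (Fin.castAdd M k))
      (PauliString fun k => s (Fin.natAdd N k)) := by
  ext i j
  simp only [PauliString, tensorDM, Matrix.of_apply]
  rw [Fin.prod_univ_add]

lemma pDist_tensor {N M : ℕ}
    {ρ : Matrix (Fin N → Fin 2) (Fin N → Fin 2) ℂ}
    {σ : Matrix (Fin M → Fin 2) (Fin M → Fin 2) ℂ}
    (hρ : ρ.IsHermitian) (hσ : σ.IsHermitian) (s : Fin (N + M) → Fin 4) :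
    pDist (tensorDM ρ σ) s =
      pDist ρ (fun k => s (Fin.castAdd M k)) * pDist σ (fun k => s (Fin.natAdd N k)) := by
  unfold pDist
  rw [pauli_split s, tensor_mul, tensor_mul, tensor_trace, tensor_trace,
    ← trace_pauli_real hρ, ← trace_pauli_real hσ, ← trace_sq_real hρ, ← trace_sq_real hσ,
    ← Complex.ofReal_mul, ← Complex.ofReal_mul, Complex.ofReal_re, Complex.ofReal_re,
    pow_add]
  simp only [Complex.ofReal_re]
  ring

lemma renyiH_comp_equiv {ι κ : Type*} [Fintype ι] [Fintype κ] (e : ι ≃ κ)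
    (α : ℝ) (f : κ → ℝ) : renyiH α (f ∘ e) = renyiH α f := by
  unfold renyiH
  by_cases h : α = 1 <;> simp only [h, if_true, if_false, Function.comp]
  · rw [← e.sum_comp fun k => f k * Real.log (f k)]
  · rw [← e.sum_comp fun k => f k ^ α]

lemma renyiH_prod {ι κ : Type*} [Fintype ι] [Fintype κ] (α : ℝ)
    (p : ι → ℝ) (q : κ → ℝ) (hp : ∀ i, 0 ≤ p i) (hq : ∀ j, 0 ≤ q j)
    (hp1 : ∑ i, p i = 1) (hq1 : ∑ j, q j = 1) :
    renyiH α (fun x : ι × κ => p x.1 * q x.2) = renyiH α p + renyiH α q := by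
  unfold renyiH
  by_cases h : α = 1 <;> simp only [h, if_true, if_false]
  · rw [Fintype.sum_prod_type]
    have key : ∀ i j, p i * q j * Real.log (p i * q j)
        = q j * (p i * Real.log (p i)) + p i * (q j * Real.log (q j)) := by
      intro i j
      rcases eq_or_ne (p i) 0 with h1 | h1
      · simp [h1]
      rcases eq_or_ne (q j) 0 with h2 | h2
      · simp [h2]
      rw [Real.log_mul h1 h2]; ring
    simp_rw [key, Finset.sum_add_distrib, ← Finset.mul_sum, ← Finset.sum_mul, hq1, hp1]
    ring
  · have hpα : 0 < ∑ i, p i ^ α := by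
      obtain ⟨i, hi⟩ : ∃ i, 0 < p i := by
        by_contra hc
        push_neg at hc
        have : ∑ i, p i ≤ 0 := Finset.sum_nonpos fun i _ => hc i
        linarith [hp1 ▸ this]
      refine Finset.sum_pos' (fun j _ => Real.rpow_nonneg (hp j) α)
        ⟨i, Finset.mem_univ i, Real.rpow_pos_of_pos hi α⟩
    have hqα : 0 < ∑ j, q j ^ α := by
      obtain ⟨j, hj⟩ : ∃ j, 0 < q j := by
        by_contra hc
        push_neg at hc
        have : ∑ j, q j ≤ 0 := Finset.sum_nonpos fun j _ => hc j
        linarith [hq1 ▸ this]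
      refine Finset.sum_pos' (fun i _ => Real.rpow_nonneg (hq i) α)
        ⟨j, Finset.mem_univ j, Real.rpow_pos_of_pos hj α⟩
    have hps : ∑ x : ι × κ, (p x.1 * q x.2) ^ α = (∑ i, p i ^ α) * ∑ j, q j ^ α := by
      rw [Fintype.sum_prod_type, Finset.sum_mul_sum]
      exact Finset.sum_congr rfl fun i _ => Finset.sum_congr rfl fun j _ =>
        Real.mul_rpow (hp i) (hq j)
    rw [hps, Real.log_mul hpα.ne' hqα.ne', mul_add]

/-- The stabilizer Rényi entropy is additive under tensor products:
`M̃_α(ρ ⊗ σ) = M̃_α(ρ) + M̃_α(σ)`. -/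
theorem sre_additive {N M : ℕ} (α : ℝ)
    (ρ : Matrix (Fin N → Fin 2) (Fin N → Fin 2) ℂ)
    (σ : Matrix (Fin M → Fin 2) (Fin M → Fin 2) ℂ)
    (hρ : ρ.PosSemidef) (hρtr : ρ.trace = 1)
    (hσ : σ.PosSemidef) (hσtr : σ.trace = 1) :
    Msre α (tensorDM ρ σ) = Msre α ρ + Msre α σ := by
  have hρp := trace_sq_pos hρ.1 hρtr
  have hσp := trace_sq_pos hσ.1 hσtr
  have hcomp : pDist (tensorDM ρ σ) =
      (fun pr : (Fin N → Fin 4) × (Fin M → Fin 4) => pDist ρ pr.1 * pDist σ pr.2) ∘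
        ⇑(Fin.appendEquiv N M).symm := by
    funext s
    simp only [Function.comp, Fin.appendEquiv, Equiv.coe_fn_symm_mk]
    exact pDist_tensor hρ.1 hσ.1 s
  have hH : renyiH α (pDist (tensorDM ρ σ)) = renyiH α (pDist ρ) + renyiH α (pDist σ) := by
    rw [hcomp, renyiH_comp_equiv]
    exact renyiH_prod α _ _ (pDist_nonneg hρ.1 hρtr) (pDist_nonneg hσ.1 hσtr)
      (sum_pDist hρ.1 hρtr) (sum_pDist hσ.1 hσtr)
  have hS : S2 (tensorDM ρ σ) = S2 ρ + S2 σ := by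
    unfold S2
    rw [tensor_mul, tensor_trace, ← trace_sq_real hρ.1, ← trace_sq_real hσ.1,
      ← Complex.ofReal_mul, Complex.ofReal_re, Real.log_mul hρp.ne' hσp.ne']
    simp only [Complex.ofReal_re]
    ring
  unfold Msre
  rw [hH, hS]
  push_cast
  ring
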